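/- arXiv:math/9809053 — 10 statements merged into one kernel-verified Lean document; each statement's English description precedes it below -/
import Mathlib

section
/- Let R be an associative ring with unit. Then R is a left V-ring (i.e. every simple left R-module is injective) if and only if the only small left R-module is the zero module. -/
universe u

/-- A left `R`-module `K` is a *small module* if there exist a left `R`-module `L` and an
injective `R`-linear map `f : K → L` whose image is a superfluous submodule of `L`. -/
def IsSmallModule (R : Type u) [Ring R] (K : Type u) [AddCommGroup K] [Module R K] : Prop :=
  ∃ (L : Type u) (_ : AddCommGroup L) (_ : Module R L) (f : K →ₗ[R] L),
    Function.Injective f ∧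
      ∀ X : Submodule R L, LinearMap.range f ⊔ X = ⊤ → X = ⊤

/-!
A superfluous submodule lies in every maximal submodule. Over a V-ring every `y ≠ 0` avoids some
maximal submodule: for a maximal left ideal `P ⊇ ann y`, extend `R y → R ⧸ P` to the whole module
by injectivity of the simple module `R ⧸ P` and take the kernel. So the image of a small module
in its superfluous embedding is zero.

Conversely, given a simple `M` and `g : I → M` on a left ideal (Baer's criterion), the image of
`I` in `R ⧸ ker g` is nonzero, hence not superfluous: `I + X₀ = R ⧸ ker g` for a proper `X₀`.
Its preimage `X` satisfies `I + X = R`, and maximality of `ker g` in `I` forces `I ∩ X = ker g`,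
so `g` factors through `I ⧸ (I ∩ X) ≅ R ⧸ X`.
-/

open Submodule LinearMap

section General

variable {R : Type*} [Ring R] {A B C M : Type*} [AddCommGroup A] [Module R A]
  [AddCommGroup B] [Module R B] [AddCommGroup C] [Module R C] [AddCommGroup M] [Module R M]

def Submodule.IsSuperfluous (N : Submodule R B) : Prop :=
  ∀ X : Submodule R B, N ⊔ X = ⊤ → X = ⊤

theorem Submodule.IsSuperfluous.le_of_isCoatom {N Q : Submodule R B} (hN : N.IsSuperfluous)
    (hQ : IsCoatom Q) : N ≤ Q := by
  by_contra hNQ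
  have hsup : N ⊔ Q = ⊤ :=
    (hQ.le_iff.mp le_sup_right).resolve_right fun h ↦ hNQ (h ▸ le_sup_left)
  exact hQ.1 (hN Q hsup)

theorem LinearMap.exists_comp_eq_of_surjective_of_ker_le {h : A →ₗ[R] C}
    (hh : Function.Surjective h) {g : A →ₗ[R] M} (hker : ker h ≤ ker g) :
    ∃ q : C →ₗ[R] M, q ∘ₗ h = g :=
  ⟨(ker h).liftQ g hker ∘ₗ (h.quotKerEquivOfSurjective hh).symm.toLinearMap, by
    ext a
    simp⟩

theorem Submodule.exists_comp_subtype_eq_of_sup_eq_top {P X : Submodule R B} (hPX : P ⊔ X = ⊤)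
    {g : P →ₗ[R] M} (hg : X.comap P.subtype ≤ ker g) :
    ∃ f : B →ₗ[R] M, f ∘ₗ P.subtype = g := by
  have hsurj : Function.Surjective (X.mkQ ∘ₗ P.subtype) := by
    rw [← range_eq_top, range_comp, range_subtype, map_mkQ_eq_top, sup_comm, hPX]
  obtain ⟨q, hq⟩ := exists_comp_eq_of_surjective_of_ker_le hsurj (g := g)
    (by rwa [ker_comp, ker_mkQ])
  exact ⟨q ∘ₗ X.mkQ, hq⟩

end General

theorem Submodule.IsSuperfluous.isSmallModule {R L : Type u} [Ring R] [AddCommGroup L]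
    [Module R L] {N : Submodule R L} (hN : N.IsSuperfluous) : IsSmallModule R N :=
  ⟨L, _, _, N.subtype, N.injective_subtype, by rwa [N.range_subtype]⟩

theorem Submodule.eq_bot_of_isSuperfluous {R L : Type u} [Ring R] [AddCommGroup L] [Module R L]
    (hS : ∀ (K : Type u) [AddCommGroup K] [Module R K], IsSmallModule R K → Subsingleton K)
    {N : Submodule R L} (hN : N.IsSuperfluous) : N = ⊥ :=
  have := hS N hN.isSmallModule
  N.eq_bot_of_subsingleton

theorem Submodule.exists_isCoatom_notMem {R L : Type u} [Ring R] [AddCommGroup L] [Module R L]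
    (hinj : ∀ P : Ideal R, P.IsMaximal → Module.Injective R (R ⧸ P)) {y : L} (hy : y ≠ 0) :
    ∃ C : Submodule R L, IsCoatom C ∧ y ∉ C := by
  set φ := toSpanSingleton R L y
  have hann : ker φ ≠ ⊤ := fun h ↦ hy (by simpa [φ] using LinearMap.congr_fun (ker_eq_top.mp h) 1)
  obtain ⟨P, hP, hφP⟩ := Ideal.exists_le_maximal _ hann
  have : IsSimpleModule R (R ⧸ P) := isSimpleModule_iff_isCoatom.mpr hP.out
  have := hinj P hP
  obtain ⟨q, hq⟩ := exists_comp_eq_of_surjective_of_ker_le φ.surjective_rangeRestrict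
    (g := P.mkQ) (by rwa [ker_rangeRestrict, ker_mkQ])
  obtain ⟨g, hg⟩ := Module.Injective.extension_property R _ _ _ _ (range φ).injective_subtype q
  have hgy : g y = P.mkQ 1 := by
    rw [← hq, ← hg]
    simp [φ]
  have hg0 : g y ≠ 0 := by
    rw [hgy, mkQ_apply, Ne, Quotient.mk_eq_zero]
    exact fun h ↦ hP.ne_top ((Ideal.eq_top_iff_one P).mpr h)
  exact ⟨ker g, isCoatom_ker_of_surjective (surjective_of_ne_zero fun h ↦ hg0 (by simp [h])),
    hg0⟩

theorem Submodule.exists_sup_eq_top_comap_subtype_le_ker {R B M : Type u} [Ring R]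
    [AddCommGroup B] [Module R B] [AddCommGroup M] [Module R M] [IsSimpleModule R M]
    (hS : ∀ (K : Type u) [AddCommGroup K] [Module R K], IsSmallModule R K → Subsingleton K)
    (P : Submodule R B) (g : P →ₗ[R] M) :
    ∃ X : Submodule R B, P ⊔ X = ⊤ ∧ X.comap P.subtype ≤ ker g := by
  by_cases hg : g = 0
  · exact ⟨⊤, by simp, by simp [hg]⟩
  set K := (ker g).map P.subtype
  have hPK : ¬ P ≤ K := fun h ↦ hg <| ker_eq_top.mp <| by
    rwa [← comap_subtype_eq_top, comap_map_eq_of_injective P.injective_subtype] at h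
  obtain ⟨X₀, hsup, hX₀⟩ : ∃ X₀, P.map K.mkQ ⊔ X₀ = ⊤ ∧ X₀ ≠ ⊤ := by
    by_contra! h
    exact hPK <| by
      rw [← ker_mkQ K, le_ker_iff_map]
      exact eq_bot_of_isSuperfluous hS h
  set X := X₀.comap K.mkQ
  have hKX : K ≤ X := by simpa using ker_le_comap (p := X₀) K.mkQ
  have hPX : P ⊔ X = ⊤ := by
    have : K ⊔ (P ⊔ X) = ⊤ := by
      rw [← map_mkQ_eq_top, map_sup, map_comap_eq_of_surjective K.mkQ_surjective, hsup]
    rwa [sup_eq_right.mpr (hKX.trans le_sup_right)] at this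
  refine ⟨X, hPX, ?_⟩
  rcases (isCoatom_ker_of_surjective (surjective_of_ne_zero hg)).le_iff.mp
    (map_le_iff_le_comap.mp hKX) with hXP | hXP
  · rw [sup_eq_right.mpr (comap_subtype_eq_top.mp hXP)] at hPX
    refine absurd ?_ hX₀
    rw [← map_comap_eq_of_surjective K.mkQ_surjective X₀]
    change X.map K.mkQ = ⊤
    rw [hPX, map_top, range_mkQ]
  · exact hXP.le

/-- `R` is a left V-ring iff the only small left `R`-module is the zero module. -/
theorem stmt_0 (R : Type u) [Ring R] :
    (∀ (M : Type u) [AddCommGroup M] [Module R M], IsSimpleModule R M → Module.Injective R M) ↔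
      (∀ (K : Type u) [AddCommGroup K] [Module R K], IsSmallModule R K → Subsingleton K) := by
  constructor
  · rintro hV K _ _ ⟨L, _, _, f, hf, hsmall⟩
    refine subsingleton_of_forall_eq 0 fun x ↦ ?_
    by_contra hx
    obtain ⟨C, hC, hxC⟩ := exists_isCoatom_notMem
      (fun P hP ↦ hV _ (isSimpleModule_iff_isCoatom.mpr hP.out)) (y := f x)
      ((map_ne_zero_iff f hf).mpr hx)
    exact hxC (IsSuperfluous.le_of_isCoatom hsmall hC ⟨x, rfl⟩)
  · intro hS M _ _ _
    refine Module.Baer.injective fun I g ↦ ?_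
    obtain ⟨X, hIX, hX⟩ := exists_sup_eq_top_comap_subtype_le_ker hS I g
    obtain ⟨f, hf⟩ := exists_comp_subtype_eq_of_sup_eq_top hIX hX
    exact ⟨f, fun x hx ↦ LinearMap.congr_fun hf ⟨x, hx⟩⟩
end

section
/- Let R be a ring such that every left primitive ideal of R contains a regular element. Then R is a left small ring, i.e. R as a left R-module is a small module. -/
/-!
Embed `R` into an injective module `E`. An injective module is divisible by every right regular
element. If `K` were a maximal submodule of `E`, the annihilator of the simple module `E ⧸ K` would
contain such an element `r`, whence `E = r • E ⊆ K`; so `E` has no maximal submodules and its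
radical is all of `E`. Finally, a cyclic submodule `R ∙ x` with `x` in the radical is superfluous:
a proper `X` with `R ∙ x ⊔ X = ⊤` has a cyclic, hence finitely generated, quotient `E ⧸ X` and so
lies in a maximal submodule.
-/

universe u

universe v

open Module Submodule

namespace Module

theorem exists_injective_module_embedding (R : Type u) [Ring R] [Small.{v} R] (M : Type v)
    [AddCommGroup M] [Module R M] :
    ∃ (Q : Type v) (_ : AddCommGroup Q) (_ : Module R Q), Module.Injective R Q ∧
      ∃ f : M →ₗ[R] Q, Function.Injective f := by
  let Q : ModuleCat.{v} R := CategoryTheory.Injective.under (.of R M)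
  have : CategoryTheory.Injective (ModuleCat.of R Q) := CategoryTheory.Injective.injective_under _
  exact ⟨Q, _, _, injective_module_of_injective_object R Q, _,
    (ModuleCat.mono_iff_injective (CategoryTheory.Injective.ι (.of R M))).mp inferInstance⟩

variable {R : Type u} [Ring R]

theorem eq_top_of_span_singleton_sup_eq_top {M : Type v} [AddCommGroup M] [Module R M] {x : M}
    (hx : x ∈ jacobson R M) {X : Submodule R M} (hX : (R ∙ x) ⊔ X = ⊤) : X = ⊤ := by
  by_contra hX_ne
  have hsurj : Function.Surjective (LinearMap.toSpanSingleton R (M ⧸ X) (X.mkQ x)) := by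
    intro y
    obtain ⟨m, rfl⟩ := X.mkQ_surjective y
    obtain ⟨_, hy, z, hz, rfl⟩ := mem_sup.mp (hX ▸ mem_top : m ∈ (R ∙ x) ⊔ X)
    obtain ⟨a, rfl⟩ := mem_span_singleton.mp hy
    exact ⟨a, by simp [(Quotient.mk_eq_zero X).mpr hz]⟩
  have : Module.Finite R (M ⧸ X) := .of_surjective _ hsurj
  have : Nontrivial (M ⧸ X) := Quotient.nontrivial_iff.mpr hX_ne
  obtain ⟨K, hK, -⟩ := (eq_top_or_exists_le_coatom (⊥ : Submodule R (M ⧸ X))).resolve_left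
    bot_ne_top
  have hK' : IsCoatom (K.comap X.mkQ) := (isCoatom_comap_iff X.mkQ_surjective).mpr hK
  have hxK : (R ∙ x) ⊔ X ≤ K.comap X.mkQ :=
    sup_le ((span_singleton_le_iff_mem _ _).mpr (mem_sInf.mp hx _ hK')) (X.le_comap_mkQ K)
  exact hK'.1 (top_le_iff.mp (hX ▸ hxK))

namespace Injective

variable {Q : Type v} [AddCommGroup Q] [Module R Q] [Small.{v} R] [Injective R Q]

theorem exists_eq_smul_of_isRightRegular {r : R} (hr : IsRightRegular r) (q : Q) :
    ∃ q', q = r • q' := by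
  obtain ⟨g, hg⟩ := extension_property R Q R R (LinearMap.toSpanSingleton R R r) hr
    (LinearMap.toSpanSingleton R Q q)
  exact ⟨g 1, by simpa [← map_smul] using congr($hg 1).symm⟩

theorem jacobson_eq_top
    (h : ∀ K : Submodule R Q, IsCoatom K → ∃ r ∈ annihilator R (Q ⧸ K), IsRightRegular r) :
    jacobson R Q = ⊤ := by
  refine eq_top_iff.mpr fun q _ ↦ mem_sInf.mpr fun K hK ↦ ?_
  obtain ⟨r, hr_ann, hr_reg⟩ := h K hK
  obtain ⟨q', rfl⟩ := exists_eq_smul_of_isRightRegular hr_reg q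
  rw [← Quotient.mk_eq_zero, Quotient.mk_smul]
  exact mem_annihilator.mp hr_ann _

end Injective

end Module

/-- If every left primitive ideal of `R` (the annihilator of a simple left `R`-module) contains
a regular element (neither a left nor a right zero divisor), then `R` is a left small ring. -/
theorem stmt_1 (R : Type u) [Ring R]
    (h : ∀ (M : Type u) [AddCommGroup M] [Module R M], IsSimpleModule R M →
      ∃ r ∈ Module.annihilator R M, (∀ b : R, r * b = 0 → b = 0) ∧ (∀ b : R, b * r = 0 → b = 0)) :
    IsSmallModule R R := by
  obtain ⟨E, _, _, _, f, hf⟩ := exists_injective_module_embedding R R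
  refine ⟨E, _, _, f, hf, fun X hX ↦ ?_⟩
  have hrad : jacobson R E = ⊤ := Injective.jacobson_eq_top fun K hK ↦ by
    obtain ⟨r, hr_ann, -, hr_right⟩ := h (E ⧸ K) (isSimpleModule_iff_isCoatom.mpr hK)
    exact ⟨r, hr_ann, isRightRegular_of_non_zero_divisor r hr_right⟩
  have hrange : LinearMap.range f = R ∙ f 1 := by
    rw [← LinearMap.range_toSpanSingleton]
    exact congrArg _ (LinearMap.ext_ring (by simp))
  exact eq_top_of_span_singleton_sup_eq_top (hrad ▸ mem_top) (hrange ▸ hX)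
end

section
/- Every integral domain that is not a field is a small ring, i.e. R as an R-module is a small module. -/
/-!
Embed `R` into its fraction field `K`. If `R + X = K` for a submodule `X`, then writing
`r⁻¹ = a + z` with `z ∈ X` gives `1 - r * a = r • z ∈ X` for every `r ≠ 0`. So every nonzero
element of `R` is a unit modulo the ideal `X ∩ R`; as `R` is not a field, each maximal ideal
contains a nonzero element, hence `X ∩ R = R`. Then `1 ∈ X`, so `R ⊆ X` and `X = K`.
-/

universe u

theorem Ideal.eq_top_of_forall_ne_zero_exists_one_sub_mul_mem {R : Type*} [CommRing R] [Nontrivial R]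
    (hR : ¬ IsField R) {I : Ideal R} (hI : ∀ r : R, r ≠ 0 → ∃ a, 1 - r * a ∈ I) : I = ⊤ := by
  by_contra hI_ne
  obtain ⟨m, hm, hIm⟩ := Ideal.exists_le_maximal I hI_ne
  obtain ⟨r, hrm, hr⟩ := Submodule.exists_mem_ne_zero_of_ne_bot (Ideal.bot_lt_of_maximal m hR).ne'
  obtain ⟨a, ha⟩ := hI r hr
  have h_one : (1 : R) ∈ m := by
    simpa using m.add_mem (hIm ha) (m.mul_mem_right a hrm)
  exact hm.ne_top ((Ideal.eq_top_iff_one m).mpr h_one)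

theorem Submodule.exists_algebraMap_one_sub_mul_mem_of_range_sup_eq_top {R A : Type*}
    [CommRing R] [Ring A] [Algebra R A] {X : Submodule R A}
    (hX : LinearMap.range (Algebra.linearMap R A) ⊔ X = ⊤) {r : R}
    (hr : IsUnit (algebraMap R A r)) : ∃ a, algebraMap R A (1 - r * a) ∈ X := by
  obtain ⟨_, ⟨a, rfl⟩, z, hz, h_inv⟩ :=
    Submodule.mem_sup.mp (hX ▸ Submodule.mem_top : (hr.unit⁻¹ : Aˣ).val ∈ _)
  refine ⟨a, ?_⟩
  have h_eq : algebraMap R A (1 - r * a) = r • z := by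
    rw [← add_sub_cancel_left (Algebra.linearMap R A a) z, h_inv, smul_sub, Algebra.smul_def,
      Algebra.smul_def, IsUnit.mul_val_inv, Algebra.linearMap_apply, map_sub, map_one, map_mul]
  exact h_eq ▸ X.smul_mem r hz

/-- Every integral domain that is not a field is a small ring. -/
theorem stmt_2 (R : Type u) [CommRing R] [IsDomain R] (h : ¬ IsField R) :
    IsSmallModule R R := by
  set K := FractionRing R
  refine ⟨K, inferInstance, inferInstance, Algebra.linearMap R K,
    IsFractionRing.injective R K, fun X hX => ?_⟩
  have h_comap : X.comap (Algebra.linearMap R K) = ⊤ :=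
    Ideal.eq_top_of_forall_ne_zero_exists_one_sub_mul_mem h fun r hr =>
      X.exists_algebraMap_one_sub_mul_mem_of_range_sup_eq_top hX
        (IsLocalization.map_units K ⟨r, mem_nonZeroDivisors_of_ne_zero hr⟩)
  have h_range : LinearMap.range (Algebra.linearMap R K) ≤ X := by
    rw [← Submodule.one_eq_range, Submodule.one_le, ← map_one (algebraMap R K)]
    exact (Submodule.eq_top_iff'.mp h_comap) 1
  rw [← hX, sup_eq_right.mpr h_range]
end

section
/- Let R be a ring whose Jacobson radical J(R) contains a regular element. Then R is a left small ring, i.e. R as a left R-module is a small module. -/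
universe u

/-!
Right multiplication by `r` embeds `R` into itself as the left ideal `R r`, injectively because
`r` is not a right zero divisor. A left ideal inside `J(R)` is superfluous in `R`: a proper left
ideal `X` lies in a maximal left ideal, which contains `J(R)` and hence `J(R) + X`.
-/

namespace Ideal

variable {R : Type*} [Ring R]

theorem eq_top_of_sup_eq_top_of_le_jacobson_bot {I X : Ideal R} (hI : I ≤ jacobson ⊥)
    (hIX : I ⊔ X = ⊤) : X = ⊤ := by
  by_contra hX
  obtain ⟨M, hM, hXM⟩ := X.exists_le_maximal hX
  have hIM : I ≤ M := hI.trans (jacobson_bot (R := R) ▸ Ring.jacobson_le_of_isMaximal M)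
  exact hM.ne_top (top_le_iff.mp (hIX ▸ sup_le hIM hXM))

end Ideal

theorem isSmallModule_self_of_mem_jacobson_bot {R : Type u} [Ring R] {r : R}
    (hrJ : r ∈ Ideal.jacobson ⊥) (hr : IsRightRegular r) : IsSmallModule R R := by
  refine ⟨R, inferInstance, inferInstance, LinearMap.toSpanSingleton R R r, hr, fun X hX => ?_⟩
  rw [← LinearMap.span_singleton_eq_range] at hX
  exact Ideal.eq_top_of_sup_eq_top_of_le_jacobson_bot
    ((Ideal.span_singleton_le_iff_mem _).mpr hrJ) hX

/-- If the Jacobson radical of `R` contains a regular element (neither a left nor a right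
zero divisor), then `R` is a left small ring. -/
theorem stmt_3 (R : Type u) [Ring R]
    (h : ∃ r ∈ Ideal.jacobson (⊥ : Ideal R),
      (∀ b : R, r * b = 0 → b = 0) ∧ (∀ b : R, b * r = 0 → b = 0)) :
    IsSmallModule R R := by
  obtain ⟨r, hrJ, -, hr⟩ := h
  exact isSmallModule_self_of_mem_jacobson_bot hrJ (isRightRegular_iff_left_eq_zero_of_mul.mpr hr)
end

section
/- Let R be a left small ring, let E be a nonzero injective left R-module, and let λ be the cardinality of some generating set of E. Then λ is infinite, and the direct sum R^{(λ)} of λ copies of R is not a small left R-module. -/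
universe u

/-!
A quotient of a small module is small: push the superfluous embedding out along the quotient map.
A nonzero injective module is not small, since it is a direct summand of every module containing
it, and a superfluous direct summand is zero. As `R^{(s)}` maps onto `E`, it is therefore not
small. On the other hand finite sums of superfluous submodules are superfluous, so `R^n` is small
for every finite `n`; hence `s` is infinite.
-/

open LinearMap Submodule

namespace Submodule

variable {R L M : Type*} [Ring R] [AddCommGroup L] [Module R L] [AddCommGroup M] [Module R M]

def IsSuperfluous_s4 (N : Submodule R L) : Prop :=
  ∀ X : Submodule R L, N ⊔ X = ⊤ → X = ⊤

theorem isSuperfluous_bot : (⊥ : Submodule R L).IsSuperfluous_s4 := fun X hX => by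
  simpa using hX

theorem IsSuperfluous_s4.sup {N P : Submodule R L} (hN : N.IsSuperfluous_s4) (hP : P.IsSuperfluous_s4) :
    (N ⊔ P).IsSuperfluous_s4 := fun X hX =>
  hP X (hN _ (by rwa [sup_assoc] at hX))

theorem IsSuperfluous_s4.iSup {ι : Type*} [Finite ι] {N : ι → Submodule R L}
    (hN : ∀ i, (N i).IsSuperfluous_s4) : (⨆ i, N i).IsSuperfluous_s4 :=
  SupClosed.iSup_mem (s := {P : Submodule R L | P.IsSuperfluous_s4})
    (fun _ hP _ hQ => IsSuperfluous_s4.sup hP hQ) isSuperfluous_bot hN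

theorem IsSuperfluous_s4.map {N : Submodule R L} (hN : N.IsSuperfluous_s4) (g : L →ₗ[R] M) :
    (N.map g).IsSuperfluous_s4 := by
  intro X hX
  have hcomap : N ⊔ X.comap g = ⊤ := by
    refine eq_top_iff.mpr fun x _ => ?_
    obtain ⟨_, ⟨n, hn, rfl⟩, y, hy, hxy⟩ :=
      mem_sup.mp (hX ▸ mem_top : g x ∈ N.map g ⊔ X)
    have hxn : x - n ∈ X.comap g := by
      rw [mem_comap, map_sub, ← hxy, add_sub_cancel_left]
      exact hy
    simpa using add_mem_sup hn hxn
  have hrange : range g ≤ X := range_le_iff_comap.mpr (hN _ hcomap)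
  exact top_le_iff.mp (hX ▸ sup_le (map_le_range.trans hrange) le_rfl)

end Submodule

section SmallModule

variable {R : Type u} [Ring R]

theorem IsSmallModule.of_surjective {K K' : Type u} [AddCommGroup K] [Module R K]
    [AddCommGroup K'] [Module R K'] (hK : IsSmallModule R K) (g : K →ₗ[R] K')
    (hg : Function.Surjective g) : IsSmallModule R K' := by
  obtain ⟨L, _, _, f, hf, hsmall⟩ := hK
  set N := (ker g).map f
  have hker : ker g = ker (N.mkQ ∘ₗ f) := by
    rw [ker_comp, ker_mkQ, comap_map_eq_of_injective hf]
  let ψ := (ker g).liftQ (N.mkQ ∘ₗ f) hker.le ∘ₗ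
    (g.quotKerEquivOfSurjective hg).symm.toLinearMap
  refine ⟨L ⧸ N, inferInstance, inferInstance, ψ, ?_, ?_⟩
  · exact (ker_eq_bot.mp (ker_liftQ_eq_bot' _ _ hker)).comp (LinearEquiv.injective _)
  · have hrange : range ψ = (range f).map N.mkQ := by
      rw [range_comp_of_range_eq_top _ (LinearEquiv.range _), range_liftQ, range_comp]
    exact hrange ▸ IsSuperfluous_s4.map hsmall N.mkQ

theorem Module.Injective.not_isSmallModule {E : Type u} [AddCommGroup E] [Module R E]
    [Nontrivial E] (hE : Module.Injective R E) : ¬ IsSmallModule R E := by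
  rintro ⟨L, _, _, f, hf, hsmall⟩
  obtain ⟨r, hr⟩ := hE.out f hf LinearMap.id
  have hsup : range f ⊔ ker r = ⊤ := eq_top_iff.mpr fun l _ =>
    mem_sup.mpr ⟨f (r l), mem_range_self f _, l - f (r l), by simp [hr], add_sub_cancel _ _⟩
  obtain ⟨x, hx⟩ := exists_ne (0 : E)
  have hfx : f x ∈ ker r := hsmall _ hsup ▸ mem_top
  exact hx (by simpa [hr] using hfx)

theorem IsSmallModule.finsupp {M : Type u} [AddCommGroup M] [Module R M] (hM : IsSmallModule R M)
    (ι : Type u) [Finite ι] : IsSmallModule R (ι →₀ M) := by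
  obtain ⟨L, _, _, f, hf, hsmall⟩ := hM
  refine ⟨ι →₀ L, inferInstance, inferInstance, Finsupp.mapRange.linearMap f,
    Finsupp.mapRange_injective _ (map_zero f) hf, ?_⟩
  have hrange : range (Finsupp.mapRange.linearMap (α := ι) f) =
      ⨆ i, (range f).map (Finsupp.lsingle i) := by
    rw [range_eq_map, ← Finsupp.iSup_lsingle_range, Submodule.map_iSup]
    refine iSup_congr fun i => ?_
    rw [← range_comp, ← range_comp]
    congr 1
    ext
    simp
  rw [hrange]
  exact IsSuperfluous_s4.iSup fun i => IsSuperfluous_s4.map hsmall _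

end SmallModule

/-- If `R` is a left small ring, `E` is a nonzero injective left `R`-module and `λ = #s` is the
cardinality of a generating set `s` of `E`, then `λ` is infinite and the direct sum of `λ` copies
of `R` is not a small left `R`-module. -/
theorem stmt_4 (R : Type u) [Ring R] (hR : IsSmallModule R R)
    (E : Type u) [AddCommGroup E] [Module R E] [Nontrivial E] (hE : Module.Injective R E)
    (s : Set E) (hs : Submodule.span R s = ⊤) :
    Cardinal.aleph0 ≤ Cardinal.mk s ∧ ¬ IsSmallModule R (s →₀ R) := by
  have hsurj : Function.Surjective (Finsupp.linearCombination R ((↑) : s → E)) := by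
    rw [← range_eq_top, Finsupp.range_linearCombination, Subtype.range_coe, hs]
  have hnot : ¬ IsSmallModule R (s →₀ R) := fun h =>
    hE.not_isSmallModule (h.of_surjective _ hsurj)
  refine ⟨?_, hnot⟩
  by_contra! hfin
  have : Finite s := Cardinal.lt_aleph0_iff_finite.mp hfin
  exact hnot (hR.finsupp s)
end

section
/- Every commutative semiperfect ring R is isomorphic as a ring to a direct product T × S, where S is a semisimple ring and T is an almost small ring (i.e. T as a T-module is τ_cG-torsion: for all T-submodules U ⊊ V ⊆ T, the quotient V/U contains a nonzero small T-module). -/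
universe u

/-- `Z*(M)` is the sum of all submodules of `M` that are small modules. -/
def ZStar (R : Type u) [Ring R] (M : Type u) [AddCommGroup M] [Module R M] : Submodule R M :=
  sSup {N : Submodule R M | IsSmallModule R ↥N}

/-- A left `R`-module `M` is `τ_cG`-torsion if `Z*(V/U) ≠ 0` for all submodules `U ⊊ V ⊆ M`. -/
def IsCGTorsion (R : Type u) [Ring R] (M : Type u) [AddCommGroup M] [Module R M] : Prop :=
  ∀ U V : Submodule R M, U < V → ZStar R (↥V ⧸ Submodule.comap V.subtype U) ≠ ⊥

/-!
Lift to an idempotent `e` a generator of the image of `ann J(R)` in the semisimple ring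
`R ⧸ J(R)`; then `e J(R) = 0` and `R ≅ R ⧸ (e) × R ⧸ (1 - e)`, where the second factor is a
quotient of `R ⧸ J(R)`, hence semisimple. Over `T = R ⧸ (e)` every nonzero module `N` has a
nonzero small submodule: if `J(T) N ≠ 0`, some `T (j y)` with `j ∈ J(T)` is small in `T y` by
Nakayama; otherwise a local idempotent of `R` cuts out a copy of some `T ⧸ m` in `N`, and
`T ⧸ m` is small because multiplication by a suitable `a ∈ J(T)` embeds it into `T ⧸ a m`.
Such an `a` exists since, by the choice of `e`, no local factor of `T` is a field.
-/

open Ideal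

section Jacobson

variable {R : Type*} [CommRing R]

theorem eq_zero_of_mul_eq_self_of_mem_jacobson {x j : R} (hj : j ∈ jacobson (⊥ : Ideal R))
    (h : x * j = x) : x = 0 :=
  (mem_jacobson_bot.mp hj (-1)).mul_left_eq_zero.mp (by linear_combination -h)

theorem Ideal.Quotient.mk_mem_jacobson_bot (I : Ideal R) {x : R}
    (hx : x ∈ jacobson (⊥ : Ideal R)) : mk I x ∈ jacobson (⊥ : Ideal (R ⧸ I)) := by
  rw [jacobson_bot] at hx ⊢
  exact Ring.le_comap_jacobson (mk I) hx

theorem eq_zero_of_mul_eq_zero_of_notMem {m : Ideal R} (hm : m.IsMaximal) {f y s : R}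
    (hfm : ∀ x ∈ m, f * x ∈ jacobson (⊥ : Ideal R)) (hy : y * f = y) (hs : s ∉ m)
    (h : y * s = 0) : y = 0 := by
  obtain ⟨c, x, hx, hcx⟩ := hm.exists_inv hs
  refine eq_zero_of_mul_eq_self_of_mem_jacobson (hfm x hx) ?_
  linear_combination x * hy + y * hcx - c * h

theorem IsSemisimpleRing.exists_isIdempotentElem_mul_eq_self {Q : Type*} [CommRing Q]
    [IsSemisimpleRing Q] (I : Ideal Q) :
    ∃ ε ∈ I, IsIdempotentElem ε ∧ ∀ x ∈ I, x * ε = x := by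
  obtain ⟨ε, hε, rfl⟩ := IsSemisimpleRing.ideal_eq_span_idempotent I
  refine ⟨ε, mem_span_singleton_self ε, hε, fun x hx => ?_⟩
  obtain ⟨c, rfl⟩ := mem_span_singleton'.mp hx
  rw [mul_assoc, hε.eq]

end Jacobson

section Semiperfect

def LiftsIdempotentsModJacobson (R : Type*) [CommRing R] : Prop :=
  ∀ x : R ⧸ jacobson (⊥ : Ideal R), IsIdempotentElem x →
    ∃ e : R, IsIdempotentElem e ∧ Ideal.Quotient.mk (jacobson (⊥ : Ideal R)) e = x

variable {R : Type*} [CommRing R] [IsSemisimpleRing (R ⧸ jacobson (⊥ : Ideal R))]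

theorem exists_isIdempotentElem_mul_sub_self_mem_jacobson
    (hlift : LiftsIdempotentsModJacobson R) (I : Ideal R) :
    ∃ e, IsIdempotentElem e ∧ e ∈ I ⊔ jacobson ⊥ ∧
      ∀ x ∈ I, x * e - x ∈ jacobson (⊥ : Ideal R) := by
  obtain ⟨ε, hεI, hε, hεmul⟩ := IsSemisimpleRing.exists_isIdempotentElem_mul_eq_self
    (I.map (Ideal.Quotient.mk (jacobson ⊥)))
  obtain ⟨e, he, rfl⟩ := hlift ε hε
  refine ⟨e, he, ?_, fun x hx => ?_⟩
  · obtain ⟨x, hx, hxe⟩ := (mem_map_iff_of_surjective _ Ideal.Quotient.mk_surjective).mp hεI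
    rw [← sub_add_cancel e x]
    exact add_mem (mem_sup_right (Ideal.Quotient.eq.mp hxe.symm)) (mem_sup_left hx)
  · rw [← Ideal.Quotient.eq_zero_iff_mem, map_sub, map_mul, hεmul _ (mem_map_of_mem _ hx),
      sub_self]

theorem exists_isIdempotentElem_annihilator_jacobson
    (hlift : LiftsIdempotentsModJacobson R) :
    ∃ e, IsIdempotentElem e ∧ (∀ k ∈ jacobson (⊥ : Ideal R), e * k = 0) ∧
      ∀ r, (∀ k ∈ jacobson (⊥ : Ideal R), r * k = 0) → r * e - r ∈ jacobson (⊥ : Ideal R) := by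
  obtain ⟨e, he, heJ, hann⟩ := exists_isIdempotentElem_mul_sub_self_mem_jacobson hlift
    (Submodule.annihilator (jacobson (⊥ : Ideal R)))
  refine ⟨e, he, fun k hk => ?_, fun r hr => hann r (Submodule.mem_annihilator.mpr hr)⟩
  obtain ⟨a, ha, j, hj, rfl⟩ := Submodule.mem_sup.mp heJ
  have hak : a * k = 0 := Submodule.mem_annihilator.mp ha k hk
  refine eq_zero_of_mul_eq_self_of_mem_jacobson hj ?_
  linear_combination k * he.eq - (a + j) * hak

theorem exists_isIdempotentElem_notMem_mul_mem_jacobson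
    (hlift : LiftsIdempotentsModJacobson R) {m : Ideal R} (hm : m.IsMaximal) :
    ∃ f, IsIdempotentElem f ∧ f ∉ m ∧ ∀ x ∈ m, f * x ∈ jacobson (⊥ : Ideal R) := by
  obtain ⟨e, he, hem, hmul⟩ := exists_isIdempotentElem_mul_sub_self_mem_jacobson hlift m
  have hJm : jacobson (⊥ : Ideal R) ≤ m := sInf_le ⟨bot_le, hm⟩
  rw [sup_eq_left.mpr hJm] at hem
  refine ⟨1 - e, he.one_sub, fun h => hm.ne_top ?_, fun x hx => ?_⟩
  · rw [eq_top_iff_one, ← sub_add_cancel 1 e]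
    exact add_mem h hem
  · rw [← neg_mem_iff, show -((1 - e) * x) = x * e - x by ring]
    exact hmul x hx

theorem isSemisimpleRing_quotient_of_jacobson_le {I : Ideal R} (h : jacobson ⊥ ≤ I) :
    IsSemisimpleRing (R ⧸ I) :=
  RingHom.isSemisimpleRing_of_surjective (Ideal.Quotient.factor h)
    (Ideal.Quotient.factor_surjective h)

theorem exists_notMem_mul_mem_jacobson_quotient
    (hlift : LiftsIdempotentsModJacobson R) (I : Ideal R) (mT : Ideal (R ⧸ I))
    (hmT : mT.IsMaximal) :
    ∃ g ∉ mT, ∀ t ∈ mT, g * t ∈ jacobson (⊥ : Ideal (R ⧸ I)) := by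
  obtain ⟨f, -, hfm, hfJ⟩ := exists_isIdempotentElem_notMem_mul_mem_jacobson hlift
    (comap_isMaximal_of_surjective _ Ideal.Quotient.mk_surjective (K := mT))
  refine ⟨Ideal.Quotient.mk I f, hfm, fun t ht => ?_⟩
  obtain ⟨x, rfl⟩ := Ideal.Quotient.mk_surjective t
  rw [← map_mul]
  exact Ideal.Quotient.mk_mem_jacobson_bot I (hfJ x ht)

end Semiperfect

section SmallModules

variable {T : Type u} [CommRing T] {M : Type u} [AddCommGroup M] [Module T M]

theorem IsSmallModule.of_injective {K : Type u} [AddCommGroup K] [Module T K]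
    (h : IsSmallModule T M) (g : K →ₗ[T] M) (hg : Function.Injective g) : IsSmallModule T K := by
  obtain ⟨L, _, _, f, hf, hsmall⟩ := h
  refine ⟨L, _, _, f ∘ₗ g, hf.comp hg, fun X hX => hsmall X (top_le_iff.mp ?_)⟩
  rw [← hX]
  exact sup_le_sup_right (LinearMap.range_comp_le_range g f) X

theorem isSmallModule_of_range_le_jacobson_smul {L : Type u} [AddCommGroup L] [Module T L]
    [Module.Finite T L] (f : M →ₗ[T] L) (hf : Function.Injective f)
    (hrange : LinearMap.range f ≤ (jacobson (⊥ : Ideal T)) • ⊤) : IsSmallModule T M := by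
  refine ⟨L, _, _, f, hf, fun X hX => top_le_iff.mp ?_⟩
  refine Submodule.le_of_le_smul_of_le_jacobson_bot Module.Finite.fg_top le_rfl ?_
  calc ⊤ = LinearMap.range f ⊔ X := hX.symm
    _ ≤ X ⊔ (jacobson (⊥ : Ideal T)) • ⊤ := sup_le (hrange.trans le_sup_right) le_sup_left

theorem isSmallModule_span_smul_of_mem_jacobson {j : T} (hj : j ∈ jacobson (⊥ : Ideal T))
    (y : M) : IsSmallModule T (T ∙ j • y) := by
  have hle := Submodule.span_singleton_smul_le T j y
  refine isSmallModule_of_range_le_jacobson_smul (Submodule.inclusion hle)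
    (Submodule.inclusion_injective hle) ?_
  rintro _ ⟨⟨z, hz⟩, rfl⟩
  obtain ⟨c, rfl⟩ := Submodule.mem_span_singleton.mp hz
  have : Submodule.inclusion hle ⟨c • j • y, hz⟩ =
      j • c • (⟨y, Submodule.mem_span_singleton_self y⟩ : T ∙ y) :=
    Subtype.ext (smul_comm c j y)
  rw [this]
  exact Submodule.smul_mem_smul hj Submodule.mem_top

theorem isSmallModule_quotient_of_isMaximal {m : Ideal T} [m.IsMaximal] {a : T}
    (ha : a ∈ jacobson (⊥ : Ideal T)) (ham : ∀ t ∈ m, a * t ≠ a) : IsSmallModule T (T ⧸ m) := by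
  have : IsSimpleModule T (T ⧸ m) := isSimpleModule_iff_isCoatom.mpr (isMaximal_def.mp ‹_›)
  let φ : T ⧸ m →ₗ[T] T ⧸ (span {a} * m) :=
    Submodule.mapQ m _ (LinearMap.mulLeft T a) fun t ht => mem_span_singleton_mul.mpr ⟨t, ht, rfl⟩
  refine isSmallModule_of_range_le_jacobson_smul φ (LinearMap.injective_of_ne_zero fun h => ?_) ?_
  · have h1 : (Submodule.Quotient.mk (a * 1) : T ⧸ (span {a} * m)) = 0 :=
      LinearMap.congr_fun h (Submodule.Quotient.mk 1)
    rw [mul_one, Submodule.Quotient.mk_eq_zero] at h1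
    obtain ⟨t, ht, hat⟩ := mem_span_singleton_mul.mp h1
    exact ham t ht hat
  · rintro _ ⟨q, rfl⟩
    obtain ⟨t, rfl⟩ := Submodule.Quotient.mk_surjective _ q
    have : φ (Submodule.Quotient.mk t) = a • Submodule.Quotient.mk t := rfl
    rw [this]
    exact Submodule.smul_mem_smul ha Submodule.mem_top

theorem isSmallModule_span_singleton_of_le_torsionOf {m : Ideal T} [hm : m.IsMaximal] {w : M}
    (hw : w ≠ 0) (hmw : m ≤ torsionOf T M w) (h : IsSmallModule T (T ⧸ m)) :
    IsSmallModule T (T ∙ w) := by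
  have heq : torsionOf T M w = m :=
    (hm.eq_of_le ((torsionOf_eq_top_iff T w).not.mpr hw) hmw).symm
  let e := (quotTorsionOfEquivSpanSingleton T M w).symm ≪≫ₗ Submodule.quotEquivOfEq _ _ heq
  exact h.of_injective e.toLinearMap e.injective

theorem zStar_ne_bot_of_isSmallModule {N : Submodule T M} (hN : N ≠ ⊥)
    (h : IsSmallModule T N) : ZStar T M ≠ ⊥ :=
  fun hZ => hN (le_bot_iff.mp (hZ ▸ le_sSup h))

theorem zStar_ne_bot
    (hloc : ∀ m : Ideal T, m.IsMaximal → ∃ g ∉ m, ∀ t ∈ m, g * t ∈ jacobson (⊥ : Ideal T))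
    (hsmall : ∀ m : Ideal T, m.IsMaximal → IsSmallModule T (T ⧸ m)) [Nontrivial M] :
    ZStar T M ≠ ⊥ := by
  by_cases hJ : ∃ j ∈ jacobson (⊥ : Ideal T), ∃ y : M, j • y ≠ 0
  · obtain ⟨j, hj, y, hy⟩ := hJ
    exact zStar_ne_bot_of_isSmallModule (Submodule.span_singleton_eq_bot.not.mpr hy)
      (isSmallModule_span_smul_of_mem_jacobson hj y)
  push Not at hJ
  obtain ⟨x, hx⟩ := exists_ne (0 : M)
  obtain ⟨m, hm, hxm⟩ := exists_le_maximal _ ((torsionOf_eq_top_iff T x).not.mpr hx)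
  obtain ⟨g, hgm, hgJ⟩ := hloc m hm
  have hgx : g • x ≠ 0 := fun h => hgm (hxm ((mem_torsionOf_iff x g).mpr h))
  have hmw : m ≤ torsionOf T M (g • x) := fun t ht => by
    rw [mem_torsionOf_iff, smul_smul, mul_comm]
    exact hJ _ (hgJ t ht) x
  exact zStar_ne_bot_of_isSmallModule (Submodule.span_singleton_eq_bot.not.mpr hgx)
    (isSmallModule_span_singleton_of_le_torsionOf hgx hmw (hsmall m hm))

theorem IsCGTorsion.of_zStar_ne_bot
    (h : ∀ (N : Type u) [AddCommGroup N] [Module T N], Nontrivial N → ZStar T N ≠ ⊥) :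
    IsCGTorsion T M := fun _ _ hUV =>
  h _ (Submodule.Quotient.nontrivial_iff.mpr
    (Submodule.comap_subtype_eq_top.not.mpr (not_le_of_gt hUV)))

end SmallModules

section AlmostSmall

variable {R : Type u} [CommRing R] [IsSemisimpleRing (R ⧸ jacobson (⊥ : Ideal R))]

/-- The local idempotent `f` at `m` does not annihilate the radical, since otherwise
`f ≡ f e ∈ f m ⊆ J(R)`; any `f k ≠ 0` with `k ∈ J(R)` then witnesses that `T ⧸ m` is small. -/
theorem isSmallModule_quotient_of_annihilator_jacobson
    (hlift : LiftsIdempotentsModJacobson R)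
    {e : R} (he : IsIdempotentElem e) (heJ : ∀ k ∈ jacobson (⊥ : Ideal R), e * k = 0)
    (hann : ∀ r, (∀ k ∈ jacobson (⊥ : Ideal R), r * k = 0) → r * e - r ∈ jacobson (⊥ : Ideal R))
    (mT : Ideal (R ⧸ span {e})) (hmT : mT.IsMaximal) :
    IsSmallModule (R ⧸ span {e}) ((R ⧸ span {e}) ⧸ mT) := by
  set m := mT.comap (Ideal.Quotient.mk (span {e}))
  have hm : m.IsMaximal := comap_isMaximal_of_surjective _ Ideal.Quotient.mk_surjective
  obtain ⟨f, hf, hfm, hfJ⟩ := exists_isIdempotentElem_notMem_mul_mem_jacobson hlift hm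
  have hem : e ∈ m := by
    simp only [m, mem_comap, Ideal.Quotient.eq_zero_iff_mem.mpr (mem_span_singleton_self e),
      zero_mem]
  obtain ⟨k, hk, hfk⟩ : ∃ k ∈ jacobson (⊥ : Ideal R), f * k ≠ 0 := by
    by_contra! h
    have hfJ' : f ∈ jacobson (⊥ : Ideal R) := by
      simpa using sub_mem (hfJ e hem) (hann f h)
    exact hfm ((sInf_le ⟨bot_le, hm⟩ : jacobson (⊥ : Ideal R) ≤ m) hfJ')
  refine isSmallModule_quotient_of_isMaximal
    (Ideal.Quotient.mk_mem_jacobson_bot _ (mul_mem_left _ f hk)) fun t ht hkt => hfk ?_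
  obtain ⟨s, rfl⟩ := Ideal.Quotient.mk_surjective t
  obtain ⟨c, hc⟩ := mem_span_singleton'.mp (Ideal.Quotient.eq.mp (by rwa [map_mul]) :
    f * k * s - f * k ∈ span {e})
  refine eq_zero_of_mul_eq_zero_of_notMem hm hfJ (s := 1 - s) (by rw [mul_right_comm, hf.eq])
    (fun h => (ne_top_iff_one m).mp hm.ne_top ((Submodule.sub_mem_iff_left _ ht).mp h)) ?_
  linear_combination (1 - e) * hc + c * he.eq + f * (1 - s) * heJ k hk

end AlmostSmall

/-- Every commutative semiperfect ring is isomorphic, as a ring, to a product `T × S` with `S`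
semisimple and `T` almost small. -/
theorem stmt_9 (R : Type u) [CommRing R]
    (hss : IsSemisimpleRing (R ⧸ Ideal.jacobson (⊥ : Ideal R)))
    (hlift : ∀ x : R ⧸ Ideal.jacobson (⊥ : Ideal R), IsIdempotentElem x →
      ∃ e : R, IsIdempotentElem e ∧ Ideal.Quotient.mk (Ideal.jacobson (⊥ : Ideal R)) e = x) :
    ∃ (T S : Type u) (_ : Ring T) (_ : Ring S),
      Nonempty (R ≃+* T × S) ∧ IsSemisimpleRing S ∧ IsCGTorsion T T := by
  obtain ⟨e, he, heJ, hann⟩ := exists_isIdempotentElem_annihilator_jacobson hlift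
  refine ⟨R ⧸ span {e}, R ⧸ span {1 - e}, inferInstance, inferInstance,
    ⟨(AlgEquiv.prodQuotientOfIsIdempotentElem ℤ he he.one_sub (add_sub_cancel e 1)
      he.mul_one_sub_self).toRingEquiv⟩, ?_, ?_⟩
  · refine isSemisimpleRing_quotient_of_jacobson_le fun k hk => ?_
    exact mem_span_singleton'.mpr ⟨k, by linear_combination -heJ k hk⟩
  · exact IsCGTorsion.of_zStar_ne_bot fun _ _ _ _ => zStar_ne_bot
      (exists_notMem_mul_mem_jacobson_quotient hlift _)
      (isSmallModule_quotient_of_annihilator_jacobson hlift he heJ hann)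
end

section
/- Let R be a ring such that R/Z*(_RR) is a semisimple left R-module. Then every left R-module M with Z*(M) = 0 is semisimple. -/
universe u

/-- Image of a superfluous submodule under a surjection is superfluous. -/
lemma superfluous_map {R L L' : Type u} [Ring R] [AddCommGroup L] [Module R L]
    [AddCommGroup L'] [Module R L'] (π : L →ₗ[R] L') (hπ : Function.Surjective π)
    (A : Submodule R L) (hA : ∀ X : Submodule R L, A ⊔ X = ⊤ → X = ⊤) :
    ∀ X : Submodule R L', A.map π ⊔ X = ⊤ → X = ⊤ := by
  intro X hX
  have h1 : A ⊔ X.comap π = ⊤ := by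
    rw [eq_top_iff]
    intro l _
    have : π l ∈ A.map π ⊔ X := hX ▸ Submodule.mem_top
    obtain ⟨a', ha', x, hx, hax⟩ := Submodule.mem_sup.1 this
    obtain ⟨a, ha, rfl⟩ := ha'
    refine Submodule.mem_sup.2 ⟨a, ha, l - a, ?_, by abel⟩
    show π (l - a) ∈ X
    rw [map_sub, ← hax]
    simpa using hx
  have h2 := hA _ h1
  have := Submodule.map_comap_eq_of_surjective hπ X
  rw [h2, Submodule.map_top, LinearMap.range_eq_top.2 hπ] at this
  exact this.symm

lemma isSmallModule_congr {R K K' : Type u} [Ring R] [AddCommGroup K] [Module R K]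
    [AddCommGroup K'] [Module R K'] (e : K ≃ₗ[R] K') (h : IsSmallModule R K) :
    IsSmallModule R K' := by
  obtain ⟨L, _, _, f, hf, hsup⟩ := h
  refine ⟨L, ‹_›, ‹_›, f ∘ₗ (e.symm : K' →ₗ[R] K), by exact hf.comp e.symm.injective, ?_⟩
  have : LinearMap.range (f ∘ₗ (e.symm : K' →ₗ[R] K)) = LinearMap.range f := by
    rw [LinearMap.range_comp, LinearEquiv.range, Submodule.map_top]
  rw [this]
  exact hsup

lemma isSmallModule_quotient {R K : Type u} [Ring R] [AddCommGroup K] [Module R K]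
    (h : IsSmallModule R K) (T : Submodule R K) : IsSmallModule R (K ⧸ T) := by
  obtain ⟨L, _, _, f, hf, hsup⟩ := h
  refine ⟨L ⧸ T.map f, inferInstance, inferInstance,
    Submodule.mapQ T (T.map f) f (fun x hx => Submodule.mem_map_of_mem hx), ?_, ?_⟩
  · rw [← LinearMap.ker_eq_bot, Submodule.mapQ, Submodule.ker_liftQ]
    have hk : LinearMap.ker ((T.map f).mkQ ∘ₗ f) = T := by
      rw [LinearMap.ker_comp, Submodule.ker_mkQ]
      ext x
      constructor
      · rintro hx
        obtain ⟨t, ht, hft⟩ := hx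
        exact hf hft ▸ ht
      · exact fun hx => Submodule.mem_map_of_mem hx
    rw [hk, Submodule.mkQ_map_self]
  · have hr : LinearMap.range (Submodule.mapQ T (T.map f) f
        (fun x hx => Submodule.mem_map_of_mem hx)) = (LinearMap.range f).map (T.map f).mkQ := by
      rw [Submodule.mapQ, Submodule.range_liftQ, LinearMap.range_comp]
    rw [hr]
    exact superfluous_map _ (Submodule.mkQ_surjective _) _ hsup

/-- If `R/Z*(R)` is a semisimple left `R`-module, then every `τ_cG`-torsionfree left `R`-module
(i.e. one with `Z*(M) = 0`) is semisimple. -/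
theorem stmt_12 (R : Type u) [Ring R]
    (hss : IsSemisimpleModule R (R ⧸ ZStar R R)) :
    ∀ (M : Type u) [AddCommGroup M] [Module R M], ZStar R M = ⊥ → IsSemisimpleModule R M := by
  intro M _ _ hM
  -- every cyclic submodule is semisimple
  have key : ∀ m : M, IsSemisimpleModule R (Submodule.span R {m}) := by
    intro m
    set g : R →ₗ[R] M := LinearMap.toSpanSingleton R M m
    have hle : ZStar R R ≤ LinearMap.ker g := by
      refine sSup_le fun N hN => ?_
      -- the image of N under g is a small submodule of M
      have hsmall : IsSmallModule R ↥(N.map g) := by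
        have hrange : LinearMap.range (g ∘ₗ N.subtype) = N.map g := by
          rw [LinearMap.range_comp, Submodule.range_subtype]
        exact isSmallModule_congr (hrange ▸ (g ∘ₗ N.subtype).quotKerEquivRange)
          (isSmallModule_quotient hN _)
      have : N.map g ≤ ZStar R M := le_sSup hsmall
      rw [hM, le_bot_iff] at this
      intro x hx
      have : g x ∈ Submodule.map g N := Submodule.mem_map_of_mem hx
      rw [‹Submodule.map g N = ⊥›] at this
      simpa using this
    set g' : (R ⧸ ZStar R R) →ₗ[R] M := (ZStar R R).liftQ g hle
    have hrange : LinearMap.range g' = Submodule.span R {m} := by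
      rw [Submodule.range_liftQ, LinearMap.span_singleton_eq_range]
    exact hrange ▸ IsSemisimpleModule.range g'
  refine isSemisimpleModule_of_isSemisimpleModule_submodule'
    (p := fun m : M => Submodule.span R {m}) key ?_
  rw [eq_top_iff]
  exact fun m _ => Submodule.mem_iSup_of_mem m (Submodule.mem_span_singleton_self m)
end

section
/- Let R be a semilocal ring such that l(r(J(R))) = J(R), where J(R) is the Jacobson radical, r(S) = {x ∈ R : Sx = 0} is the right annihilator and l(S) = {x ∈ R : xS = 0} is the left annihilator. Then R is a left Kasch ring, i.e. every simple left R-module embeds into R as a left R-module. -/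
/-!
A simple module `M` is killed by `J = J(R)`, so it is a quotient of the semisimple module `R/J`
and hence embeds in it. The image of a nonzero element of `M` is the class of some `t ∉ J`; as
`J = l(r(J))` there is `x ∈ r(J)` with `t * x ≠ 0`. Right multiplication by `x` is well defined
on `R/J`, and its composite with the embedding is a nonzero map out of the simple module `M`,
hence injective.
-/

universe u

section

variable {R : Type*} [Ring R]

theorem IsSimpleModule.exists_injective_toQuotient {M : Type*} [AddCommGroup M] [Module R M]
    [IsSimpleModule R M] (I : Ideal R) [IsSemisimpleModule R (R ⧸ I)]
    (hI : I ≤ Module.annihilator R M) :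
    ∃ f : M →ₗ[R] R ⧸ I, Function.Injective f := by
  have := IsSimpleModule.nontrivial R M
  obtain ⟨m, hm⟩ := exists_ne (0 : M)
  have hker : I ≤ LinearMap.ker (LinearMap.toSpanSingleton R M m) := fun r hr ↦
    Module.mem_annihilator.mp (hI hr) m
  have hsurj : Function.Surjective (I.liftQ _ hker) := by
    rw [← LinearMap.range_eq_top, Submodule.range_liftQ, LinearMap.range_eq_top]
    exact IsSimpleModule.toSpanSingleton_surjective R hm
  obtain ⟨f, hf⟩ := IsSemisimpleModule.lifting_property _ hsurj LinearMap.id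
  exact ⟨f, Function.LeftInverse.injective (g := I.liftQ _ hker) (LinearMap.congr_fun hf)⟩

theorem IsSimpleModule.exists_injective_toRing_of_injective_toQuotient {M : Type*}
    [AddCommGroup M] [Module R M] [IsSimpleModule R M] (I : Ideal R)
    (hI : {t : R | ∀ x ∈ {z : R | ∀ j ∈ I, j * z = 0}, t * x = 0} ⊆ I)
    (f : M →ₗ[R] R ⧸ I) (hf : Function.Injective f) :
    ∃ g : M →ₗ[R] R, Function.Injective g := by
  have := IsSimpleModule.nontrivial R M
  obtain ⟨m, hm⟩ := exists_ne (0 : M)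
  obtain ⟨t, ht⟩ := Submodule.Quotient.mk_surjective I (f m)
  have htI : t ∉ I := fun htI ↦ hm <| hf <| by
    rw [map_zero, ← ht, Submodule.Quotient.mk_eq_zero]
    exact htI
  obtain ⟨x, hx, htx⟩ : ∃ x, (∀ j ∈ I, j * x = 0) ∧ t * x ≠ 0 := by
    by_contra! h
    exact htI (hI h)
  have hker : I ≤ LinearMap.ker (LinearMap.toSpanSingleton R R x) := hx
  refine ⟨I.liftQ _ hker ∘ₗ f, LinearMap.injective_of_ne_zero fun h ↦ htx ?_⟩
  simpa [← ht] using LinearMap.congr_fun h m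

end

/-- A semilocal ring `R` (i.e. `R/J(R)` is semisimple) with `l(r(J(R))) = J(R)` is a left Kasch
ring: every simple left `R`-module embeds into `R`. -/
theorem stmt_14 (R : Type u) [Ring R]
    (hsemilocal : IsSemisimpleModule R (R ⧸ Ideal.jacobson (⊥ : Ideal R)))
    (hann : {x : R | ∀ y ∈ {z : R | ∀ j ∈ Ideal.jacobson (⊥ : Ideal R), j * z = 0}, x * y = 0}
      = (Ideal.jacobson (⊥ : Ideal R) : Set R)) :
    ∀ (M : Type u) [AddCommGroup M] [Module R M], IsSimpleModule R M →
      ∃ f : M →ₗ[R] R, Function.Injective f := by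
  intro M _ _ _
  obtain ⟨f, hf⟩ := IsSimpleModule.exists_injective_toQuotient (M := M) _
    (Ideal.jacobson_bot (R := R) ▸ IsSemisimpleModule.jacobson_le_annihilator R M)
  exact IsSimpleModule.exists_injective_toRing_of_injective_toQuotient _ hann.subset f hf
end

section
/- Let R be a domain (a nontrivial ring without zero divisors) that is a left max ring, i.e. every nonzero left R-module has a maximal proper submodule. Then R is left primitive, i.e. R has a faithful simple left R-module. -/
universe u

open CategoryTheory

/-- In a domain, an injective module is divisible by every nonzero element. -/
lemma div_of_inj {R : Type u} [Ring R] [IsDomain R] {E : Type u} [AddCommGroup E]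
    [Module R E] (hE : Module.Injective R E) {a : R} (ha : a ≠ 0) (e : E) :
    ∃ e' : E, a • e' = e := by
  -- right multiplication by `a` is an injective left-module map R → R
  let f : R →ₗ[R] R :=
    { toFun := fun r => r * a
      map_add' := fun x y => add_mul x y a
      map_smul' := by intro s r; simp [mul_assoc] }
  have hf : Function.Injective f := by
    intro x y hxy
    have : (x - y) * a = 0 := by
      simpa [f, sub_mul] using sub_eq_zero.mpr hxy
    rcases mul_eq_zero.mp this with h | h
    · exact sub_eq_zero.mp h
    · exact absurd h ha
  let g : R →ₗ[R] E :=
    { toFun := fun r => r • e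
      map_add' := fun x y => add_smul x y e
      map_smul' := by intro s r; simp [mul_smul] }
  obtain ⟨h, hh⟩ := hE.out f hf g
  refine ⟨h 1, ?_⟩
  have h1 : h a = e := by simpa [f, g] using hh 1
  calc a • h 1 = h (a • (1 : R)) := (map_smul h a 1).symm
    _ = h a := by rw [smul_eq_mul, mul_one]
    _ = e := h1

/-- A domain that is a left max ring (every nonzero left module has a maximal proper submodule)
is left primitive (has a faithful simple left module). -/
theorem stmt_15 (R : Type u) [Ring R] [IsDomain R]
    (hmax : ∀ (M : Type u) [AddCommGroup M] [Module R M], Nontrivial M →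
      ∃ m : Submodule R M, IsCoatom m) :
    ∃ (M : Type u) (_ : AddCommGroup M) (_ : Module R M),
      IsSimpleModule R M ∧ ∀ r : R, (∀ m : M, r • m = 0) → r = 0 := by
  classical
  -- Embed R in an injective module E.
  let X : ModuleCat.{u} R := ModuleCat.of R R
  let E : ModuleCat.{u} R := Injective.under X
  have hEinj : Module.Injective R E :=
    Module.injective_module_of_injective_object R E
      (inj := show Injective (ModuleCat.of R E) from inferInstanceAs (Injective E))
  have hι : Function.Injective (Injective.ι X) :=
    (ModuleCat.mono_iff_injective (Injective.ι X)).mp inferInstance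
  have hEnt : Nontrivial E := by
    refine ⟨Injective.ι X (show ↑X from (0 : R)), Injective.ι X (show ↑X from (1 : R)),
      fun h => ?_⟩
    exact zero_ne_one (α := R) (hι h)
  obtain ⟨N, hN⟩ := hmax E hEnt
  refine ⟨E ⧸ N, inferInstance, inferInstance, ?_, ?_⟩
  · exact (isSimpleModule_iff_isCoatom).mpr hN
  · intro r hr
    by_contra hr0
    -- every e ∈ E is r • e' for some e', and r • e' ∈ N, so N = ⊤
    have hNtop : N = ⊤ := by
      rw [Submodule.eq_top_iff']
      intro e
      obtain ⟨e', he'⟩ := div_of_inj hEinj hr0 e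
      have : (Submodule.Quotient.mk (r • e') : E ⧸ N) = 0 := by
        rw [Submodule.Quotient.mk_smul]
        exact hr _
      rw [he'] at this
      exact (Submodule.Quotient.mk_eq_zero N).mp this
    exact hN.1 hNtop
end

section
/- Let R be a ring. Every simple left R-module is either a small module or injective. -/
universe u

/-!
Embed the simple module `M` into an injective module `E`. If the image of `M` is not
superfluous, some proper `X` satisfies `M + X = E`; as `M` is simple, `M ∩ X = 0`, so `M` is a
direct summand of `E` and therefore injective itself.
-/

theorem IsAtom.isCompl_of_sup_eq_top {α : Type*} [Lattice α] [BoundedOrder α] {a b : α}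
    (ha : IsAtom a) (hsup : a ⊔ b = ⊤) (hb : b ≠ ⊤) : IsCompl a b :=
  ⟨ha.not_le_iff_disjoint.1 fun hab ↦ hb (by rwa [sup_eq_right.2 hab] at hsup),
    codisjoint_iff.2 hsup⟩

namespace Module.Injective

variable {R : Type u} [Ring R] {M E : Type u} [AddCommGroup M] [Module R M]
  [AddCommGroup E] [Module R E] [Module.Injective R E]

theorem of_leftInverse (f : M →ₗ[R] E) (r : E →ₗ[R] M) (hrf : Function.LeftInverse r f) :
    Module.Injective R M where
  out X Y _ _ _ _ i hi g := by
    obtain ⟨h, hh⟩ := Module.Injective.out i hi (f ∘ₗ g)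
    exact ⟨r ∘ₗ h, fun x ↦ by simp [hh x, hrf _]⟩

theorem of_injective_of_isCompl_range (f : M →ₗ[R] E) (hf : Function.Injective f)
    {X : Submodule R E} (hX : IsCompl (LinearMap.range f) X) : Module.Injective R M := by
  let e := LinearEquiv.ofInjective f hf
  refine of_leftInverse f (e.symm.toLinearMap ∘ₗ (LinearMap.range f).projectionOnto X hX)
    fun m ↦ ?_
  change e.symm (Submodule.projectionOnto _ X hX (e m : E)) = m
  rw [Submodule.projectionOnto_apply_left, e.symm_apply_apply]

end Module.Injective

theorem Module.exists_injective_linearMap_to_injective (R : Type u) [Ring R] (M : Type u)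
    [AddCommGroup M] [Module R M] :
    ∃ (E : Type u) (_ : AddCommGroup E) (_ : Module R E) (f : M →ₗ[R] E),
      Module.Injective R E ∧ Function.Injective f := by
  have := ModuleCat.enoughInjectives.{u} R
  let ι := CategoryTheory.Injective.ι (ModuleCat.of R M)
  exact ⟨_, inferInstance, inferInstance, ι.hom,
    Module.injective_module_of_injective_object R _
      (inj := CategoryTheory.Injective.injective_under _),
    (ModuleCat.mono_iff_injective ι).1 inferInstance⟩

/-- Every simple left `R`-module is either a small module or injective. -/
theorem stmt_18 (R : Type u) [Ring R] :
    ∀ (M : Type u) [AddCommGroup M] [Module R M], IsSimpleModule R M →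
      IsSmallModule R M ∨ Module.Injective R M := by
  intro M _ _ hM
  obtain ⟨E, _, _, f, hE, hf⟩ := Module.exists_injective_linearMap_to_injective R M
  by_cases hsmall : ∀ X : Submodule R E, LinearMap.range f ⊔ X = ⊤ → X = ⊤
  · exact .inl ⟨E, inferInstance, inferInstance, f, hf, hsmall⟩
  · push Not at hsmall
    obtain ⟨X, hsup, hX⟩ := hsmall
    have hatom : IsAtom (LinearMap.range f) :=
      isSimpleModule_iff_isAtom.1 (hM.congr (LinearEquiv.ofInjective f hf).symm)
    exact .inr (Module.Injective.of_injective_of_isCompl_range f hf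
      (hatom.isCompl_of_sup_eq_top hsup hX))
end
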